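/- arXiv:2404.01864 — 2 statements merged into one kernel-verified Lean document; each statement's English description precedes it below -/
import Mathlib

section
/- Let K ∈ ℝ^{N×N} be symmetric positive definite, let P ∈ ℝ^{k×N} be a fixed matrix, and for v ∈ ℝ^n_{≥0} let Γ(v) = (K⁻¹ + D(v))⁻¹ where D(v) = diag(v₁ I_{m₁}, …, v_n I_{m_n}). Then v ↦ tr(P Γ(v) Pᵀ) is a convex function on ℝ^n_{≥0}. -/
/-!
For positive definite `A` the quadratic `y ↦ 2⟨p, y⟩ - yᵀAy` is maximal at `y = A⁻¹p`, with
value `pᵀA⁻¹p`. Hence `A ↦ pᵀA⁻¹p` is a pointwise supremum of affine functions of `A` and is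
convex on the positive definite cone, and so is `A ↦ tr(P A⁻¹ Pᵀ)`, a sum of such forms over
the rows of `P`. The posterior precision `K⁻¹ + D(v)` is affine in `v` and positive definite on
the nonnegative orthant, so `tr(P Γ(v) Pᵀ)` is convex there.
-/

open Matrix

/-- Block-diagonal matrix `D(v) = diag(v₁ I_{m₁}, …, v_n I_{m_n})` on the index
type `Σ i, Fin (m i)`. -/
def blockDiag {n : ℕ} (m : Fin n → ℕ) (v : Fin n → ℝ) :
    Matrix ((i : Fin n) × Fin (m i)) ((i : Fin n) × Fin (m i)) ℝ :=
  Matrix.diagonal fun x => v x.1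

theorem ConvexOn.finsetSum {𝕜 E β ι : Type*} [Semiring 𝕜] [PartialOrder 𝕜]
    [AddCommMonoid E] [AddCommMonoid β] [PartialOrder β] [IsOrderedAddMonoid β]
    [SMul 𝕜 E] [Module 𝕜 β] {s : Set E} (hs : Convex 𝕜 s) (t : Finset ι) {f : ι → E → β}
    (hf : ∀ i ∈ t, ConvexOn 𝕜 s (f i)) : ConvexOn 𝕜 s fun x => ∑ i ∈ t, f i x := by
  classical
  induction t using Finset.induction_on with
  | empty => simpa using convexOn_const (0 : β) hs
  | insert i t hi ih =>
    simp only [Finset.sum_insert hi]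
    exact (hf i (t.mem_insert_self i)).add (ih fun j hj => hf j (Finset.mem_insert_of_mem hj))

namespace Matrix

variable {α ι : Type*}

theorem convex_setOf_posDef : Convex ℝ {A : Matrix α α ℝ | A.PosDef} :=
  convex_iff_forall_pos.2 fun _ hA _ hB _ _ ha hb _ => (hA.smul ha).add (hB.smul hb)

variable [Fintype α]

theorem trace_mul_mul_transpose [Fintype ι] (P : Matrix ι α ℝ) (M : Matrix α α ℝ) :
    (P * M * Pᵀ).trace = ∑ j, P j ⬝ᵥ (M *ᵥ P j) := by
  refine Finset.sum_congr rfl fun j _ => ?_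
  rw [diag_apply, Matrix.mul_assoc, mul_apply]
  simp [mul_apply, mulVec, dotProduct]

variable [DecidableEq α]

theorem PosDef.mulVec_inv_mulVec {A : Matrix α α ℝ} (hA : A.PosDef) (p : α → ℝ) :
    A *ᵥ (A⁻¹ *ᵥ p) = p := by
  rw [mulVec_mulVec, mul_nonsing_inv A (isUnit_iff_ne_zero.2 hA.det_pos.ne'), one_mulVec]

theorem PosDef.two_mul_dotProduct_sub_le {A : Matrix α α ℝ} (hA : A.PosDef) (p y : α → ℝ) :
    2 * (p ⬝ᵥ y) - y ⬝ᵥ (A *ᵥ y) ≤ p ⬝ᵥ (A⁻¹ *ᵥ p) := by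
  set q := A⁻¹ *ᵥ p
  have hAq : A *ᵥ q = p := hA.mulVec_inv_mulVec p
  have hsymm : Aᵀ = A := by simpa using hA.isHermitian.eq
  have hnonneg : 0 ≤ (y - q) ⬝ᵥ (A *ᵥ (y - q)) := by
    simpa using hA.posSemidef.dotProduct_mulVec_nonneg (y - q)
  have hexpand : (y - q) ⬝ᵥ (A *ᵥ (y - q)) = y ⬝ᵥ (A *ᵥ y) - 2 * (p ⬝ᵥ y) + p ⬝ᵥ q := by
    rw [mulVec_sub, sub_dotProduct, dotProduct_sub, dotProduct_sub, hAq,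
      dotProduct_mulVec q, ← mulVec_transpose, hsymm, hAq, dotProduct_comm y p,
      dotProduct_comm q p]
    ring
  linarith

theorem PosDef.two_mul_dotProduct_inv_mulVec_sub {A : Matrix α α ℝ} (hA : A.PosDef)
    (p : α → ℝ) :
    2 * (p ⬝ᵥ (A⁻¹ *ᵥ p)) - (A⁻¹ *ᵥ p) ⬝ᵥ (A *ᵥ (A⁻¹ *ᵥ p)) = p ⬝ᵥ (A⁻¹ *ᵥ p) := by
  rw [hA.mulVec_inv_mulVec, dotProduct_comm _ p]
  ring

theorem convexOn_dotProduct_inv_mulVec (p : α → ℝ) :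
    ConvexOn ℝ {A : Matrix α α ℝ | A.PosDef} fun A => p ⬝ᵥ (A⁻¹ *ᵥ p) := by
  refine ⟨convex_setOf_posDef, fun A hA B hB a b ha hb hab => ?_⟩
  set M := a • A + b • B
  have hM : M.PosDef := convex_setOf_posDef hA hB ha hb hab
  set y := M⁻¹ *ᵥ p
  have hsplit : y ⬝ᵥ (M *ᵥ y) = a * (y ⬝ᵥ (A *ᵥ y)) + b * (y ⬝ᵥ (B *ᵥ y)) := by
    simp only [M, add_mulVec, smul_mulVec, dotProduct_add, dotProduct_smul, smul_eq_mul]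
  calc p ⬝ᵥ (M⁻¹ *ᵥ p)
      = a * (2 * (p ⬝ᵥ y) - y ⬝ᵥ (A *ᵥ y)) + b * (2 * (p ⬝ᵥ y) - y ⬝ᵥ (B *ᵥ y)) := by
        linear_combination (hM.two_mul_dotProduct_inv_mulVec_sub p).symm - hsplit
          - 2 * (p ⬝ᵥ y) * hab
    _ ≤ a * (p ⬝ᵥ (A⁻¹ *ᵥ p)) + b * (p ⬝ᵥ (B⁻¹ *ᵥ p)) := by
        gcongr
        exacts [hA.two_mul_dotProduct_sub_le p y, hB.two_mul_dotProduct_sub_le p y]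

theorem convexOn_trace_mul_inv_mul_transpose [Fintype ι] (P : Matrix ι α ℝ) :
    ConvexOn ℝ {A : Matrix α α ℝ | A.PosDef} fun A => (P * A⁻¹ * Pᵀ).trace := by
  simp only [trace_mul_mul_transpose]
  exact ConvexOn.finsetSum convex_setOf_posDef _ fun j _ => convexOn_dotProduct_inv_mulVec (P j)

end Matrix

/-- For symmetric positive definite `K` and any fixed matrix `P`, the map
`v ↦ tr(P Γ(v) Pᵀ)` with `Γ(v) = (K⁻¹ + D(v))⁻¹` is convex on the nonnegative
orthant `ℝ^n_{≥0}`. -/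
theorem trace_posterior_covariance_convex {n k : ℕ} (m : Fin n → ℕ)
    (K : Matrix ((i : Fin n) × Fin (m i)) ((i : Fin n) × Fin (m i)) ℝ)
    (hK : K.PosDef)
    (P : Matrix (Fin k) ((i : Fin n) × Fin (m i)) ℝ) :
    ConvexOn ℝ {v : Fin n → ℝ | ∀ i, 0 ≤ v i}
      (fun v => Matrix.trace (P * (K⁻¹ + blockDiag m v)⁻¹ * P.transpose)) := by
  let precision : (Fin n → ℝ) →ᵃ[ℝ] Matrix _ _ ℝ := AffineMap.const ℝ _ K⁻¹ +
    ((diagonalLinearMap _ ℝ ℝ).comp (LinearMap.funLeft ℝ ℝ Sigma.fst)).toAffineMap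
  have hprecision : ∀ v, precision v = K⁻¹ + blockDiag m v := fun v => rfl
  have hposDef : ∀ v ∈ {v : Fin n → ℝ | ∀ i, 0 ≤ v i}, (precision v).PosDef := fun v hv =>
    hK.inv.add_posSemidef (PosSemidef.diagonal fun x => hv x.1)
  simpa only [Function.comp_def, hprecision] using
    ((convexOn_trace_mul_inv_mul_transpose P).comp_affineMap precision).subset hposDef
      (convex_Ici 0)
end

section
/- Let A ∈ ℝ^{m×d} and B ∈ ℝ^{d×d} symmetric positive definite with λ_min(Aᵀ B A + C) ≥ μ > 0 for symmetric positive definite C. If Ã satisfies ‖Ã − A‖ ≤ δ with δ‖B‖(2‖A‖ + δ) < μ/2, then Ãᵀ B Ã + C is positive definite with λ_min ≥ μ/2; in particular the perturbed Gauss–Newton system matrix is invertible. -/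
open scoped Matrix.Norms.L2Operator

open Matrix

/-! `Ãᵀ B Ã + C` is positive definite for free, as the sum of the positive semidefinite
`Ãᵀ B Ã` and the positive definite `C`. For the eigenvalue bound, write
`Ãᵀ B Ã - Aᵀ B A = (Ã - A)ᵀ B Ã + Aᵀ B (Ã - A)`: its operator norm is at most
`‖B‖ δ (2‖A‖ + δ) < μ / 2`, so passing from `A` to `Ã` lowers the quadratic form
at `x` by less than `μ / 2 · ‖x‖²`. -/

namespace Matrix

variable {m n : Type*} [Fintype m] [Fintype n]

lemma dotProduct_self_eq_norm_sq (x : n → ℝ) : x ⬝ᵥ x = ‖WithLp.toLp 2 x‖ ^ 2 := by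
  rw [← real_inner_self_eq_norm_sq, EuclideanSpace.inner_toLp_toLp, star_trivial]

omit [Fintype n] in
lemma transpose_mul_mul_sub_eq (A A' : Matrix m n ℝ) (B : Matrix m m ℝ) :
    A'ᵀ * B * A' - Aᵀ * B * A = (A' - A)ᵀ * B * A' + Aᵀ * B * (A' - A) := by
  rw [transpose_sub, Matrix.sub_mul, Matrix.sub_mul, Matrix.mul_sub]
  abel

variable [DecidableEq n]

lemma abs_dotProduct_mulVec_le (M : Matrix n n ℝ) (x : n → ℝ) :
    |x ⬝ᵥ M *ᵥ x| ≤ ‖M‖ * (x ⬝ᵥ x) := by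
  have hCS := abs_real_inner_le_norm (WithLp.toLp 2 x) (WithLp.toLp 2 (M *ᵥ x))
  rw [EuclideanSpace.inner_toLp_toLp, star_trivial, dotProduct_comm] at hCS
  calc |x ⬝ᵥ M *ᵥ x| ≤ ‖WithLp.toLp 2 x‖ * ‖WithLp.toLp 2 (M *ᵥ x)‖ := hCS
    _ ≤ ‖WithLp.toLp 2 x‖ * (‖M‖ * ‖WithLp.toLp 2 x‖) := by
      gcongr; exact M.l2_opNorm_mulVec (WithLp.toLp 2 x)
    _ = ‖M‖ * (x ⬝ᵥ x) := by rw [dotProduct_self_eq_norm_sq]; ring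

lemma le_dotProduct_mulVec_of_norm_sub_le {M N : Matrix n n ℝ} {μ ε : ℝ}
    (hM : ∀ x, μ * (x ⬝ᵥ x) ≤ x ⬝ᵥ M *ᵥ x) (hNM : ‖N - M‖ ≤ ε) (x : n → ℝ) :
    (μ - ε) * (x ⬝ᵥ x) ≤ x ⬝ᵥ N *ᵥ x := by
  have hsplit : x ⬝ᵥ N *ᵥ x = x ⬝ᵥ M *ᵥ x + x ⬝ᵥ (N - M) *ᵥ x := by
    rw [sub_mulVec, dotProduct_sub]; ring
  have hxx : 0 ≤ x ⬝ᵥ x := by rw [dotProduct_self_eq_norm_sq]; positivity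
  have hdiff := neg_le_of_abs_le ((N - M).abs_dotProduct_mulVec_le x)
  linarith [hM x, mul_le_mul_of_nonneg_right hNM hxx]

lemma norm_transpose_mul_mul_sub_le [DecidableEq m] (A A' : Matrix m n ℝ) (B : Matrix m m ℝ) :
    ‖A'ᵀ * B * A' - Aᵀ * B * A‖ ≤ ‖B‖ * ‖A' - A‖ * (2 * ‖A‖ + ‖A' - A‖) := by
  have hA' : ‖A'‖ ≤ ‖A‖ + ‖A' - A‖ := by simpa using norm_add_le A (A' - A)
  have hT (E : Matrix m n ℝ) : ‖Eᵀ‖ = ‖E‖ := by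
    rw [← conjTranspose_eq_transpose_of_trivial, l2_opNorm_conjTranspose]
  have hprod (X : Matrix n m ℝ) (Z : Matrix m n ℝ) : ‖X * B * Z‖ ≤ ‖X‖ * ‖B‖ * ‖Z‖ :=
    (l2_opNorm_mul _ _).trans (by gcongr; exact l2_opNorm_mul _ _)
  rw [transpose_mul_mul_sub_eq]
  calc _ ≤ ‖(A' - A)ᵀ * B * A'‖ + ‖Aᵀ * B * (A' - A)‖ := norm_add_le _ _
    _ ≤ ‖A' - A‖ * ‖B‖ * ‖A'‖ + ‖A‖ * ‖B‖ * ‖A' - A‖ := by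
      gcongr <;> exact (hprod _ _).trans_eq (by rw [hT])
    _ ≤ ‖A' - A‖ * ‖B‖ * (‖A‖ + ‖A' - A‖) + ‖A‖ * ‖B‖ * ‖A' - A‖ := by gcongr
    _ = ‖B‖ * ‖A' - A‖ * (2 * ‖A‖ + ‖A' - A‖) := by ring

end Matrix

theorem gauss_newton_matrix_perturbation_general {m d : ℕ}
    (A Atil : Matrix (Fin m) (Fin d) ℝ)
    (B : Matrix (Fin m) (Fin m) ℝ) (hB : B.PosDef)
    (C : Matrix (Fin d) (Fin d) ℝ) (hC : C.PosDef)
    (μ δ : ℝ)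
    (hmin : ∀ x : Fin d → ℝ, μ * (x ⬝ᵥ x) ≤ x ⬝ᵥ (Aᵀ * B * A + C).mulVec x)
    (hpert : ‖Atil - A‖ ≤ δ)
    (hsmall : δ * ‖B‖ * (2 * ‖A‖ + δ) < μ / 2) :
    (Atilᵀ * B * Atil + C).PosDef ∧
    (∀ x : Fin d → ℝ, μ / 2 * (x ⬝ᵥ x) ≤ x ⬝ᵥ (Atilᵀ * B * Atil + C).mulVec x) ∧
    IsUnit (Atilᵀ * B * Atil + C).det := by
  have hPD : (Atilᵀ * B * Atil + C).PosDef := by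
    simpa only [conjTranspose_eq_transpose_of_trivial] using
      PosDef.posSemidef_add (hB.posSemidef.conjTranspose_mul_mul_same Atil) hC
  have hδ : 0 ≤ δ := (norm_nonneg _).trans hpert
  have hclose : ‖(Atilᵀ * B * Atil + C) - (Aᵀ * B * A + C)‖ ≤ δ * ‖B‖ * (2 * ‖A‖ + δ) := by
    rw [add_sub_add_right_eq_sub]
    calc _ ≤ ‖B‖ * ‖Atil - A‖ * (2 * ‖A‖ + ‖Atil - A‖) := norm_transpose_mul_mul_sub_le A Atil B
      _ ≤ ‖B‖ * δ * (2 * ‖A‖ + δ) := by gcongr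
      _ = δ * ‖B‖ * (2 * ‖A‖ + δ) := by ring
  refine ⟨hPD, fun x => ?_, hPD.det_pos.ne'.isUnit⟩
  calc μ / 2 * (x ⬝ᵥ x) ≤ (μ - δ * ‖B‖ * (2 * ‖A‖ + δ)) * (x ⬝ᵥ x) := by
        gcongr
        · rw [dotProduct_self_eq_norm_sq]; positivity
        · linarith
    _ ≤ _ := le_dotProduct_mulVec_of_norm_sub_le hmin hclose x

/-- Perturbation bound for the Gauss–Newton system matrix: if
`λ_min(Aᵀ B A + C) ≥ μ > 0` (`B, C` symmetric positive definite) and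
`‖Ã − A‖ ≤ δ` with `δ‖B‖(2‖A‖ + δ) < μ/2`, then `Ãᵀ B Ã + C` is positive
definite with `λ_min ≥ μ/2`; in particular it is invertible. Norms of matrices
are `ℓ²` operator norms, and `x ⬝ᵥ x = ‖x‖₂²`. -/
theorem gauss_newton_matrix_perturbation {m d : ℕ}
    (A Atil : Matrix (Fin m) (Fin d) ℝ)
    (B : Matrix (Fin m) (Fin m) ℝ) (hB : B.PosDef)
    (C : Matrix (Fin d) (Fin d) ℝ) (hC : C.PosDef)
    (μ δ : ℝ) (hμ : 0 < μ) (hδ : 0 ≤ δ)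
    (hmin : ∀ x : Fin d → ℝ, μ * (x ⬝ᵥ x) ≤ x ⬝ᵥ (Aᵀ * B * A + C).mulVec x)
    (hpert : ‖Atil - A‖ ≤ δ)
    (hsmall : δ * ‖B‖ * (2 * ‖A‖ + δ) < μ / 2) :
    (Atilᵀ * B * Atil + C).PosDef ∧
    (∀ x : Fin d → ℝ, μ / 2 * (x ⬝ᵥ x) ≤ x ⬝ᵥ (Atilᵀ * B * Atil + C).mulVec x) ∧
    IsUnit (Atilᵀ * B * Atil + C).det :=
  gauss_newton_matrix_perturbation_general A Atil B hB C hC μ δ hmin hpert hsmall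
end
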